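/- In the Thue–Morse sequence (t_n)_{n≥1} over the alphabet {2,3} (fixed point of the substitution 2↦23, 3↦32, starting with 2), define t*_n = t_1 t_2 ⋯ t_n (the product of the first n terms). Every t*_n has the form a·6^k with a ∈ {1,2,3}, and the set U_a = {k ≥ 0 : a·6^k = t*_m for some m} has natural density d_1 = 1/2, d_2 = 1/4, d_3 = 1/4 respectively (density inside the index set of the sequence). -/

import Mathlib

open MeasureTheory Filter Topology

/-- The Thue–Morse sequence over the alphabet `{2,3}` (indexed from 1, starting with 2):
`tm n = 2` iff the binary digit sum of `n - 1` is even. -/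
def tm (n : ℕ) : ℕ := if Even ((Nat.digits 2 (n - 1)).sum) then 2 else 3

/-- Partial products `t*_n = t_1 t_2 ⋯ t_n` of the Thue–Morse sequence over `{2,3}`. -/
def tmProd (n : ℕ) : ℕ := ∏ k ∈ Finset.Icc 1 n, tm k

/-! Since `2j` and `2j + 1` have binary digit sums of opposite parity, consecutive terms pair up
as `t_{2j+1} t_{2j+2} = 6`, so `t*_{2j} = 6^j` and `t*_{2j+1} = t_{2j+1} 6^j`: the coefficient is
`1` at even indices and `t_m` at odd ones. Moreover `t_{2j+1} = t_{j+1}`, so `t_{4i+1}` and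
`t_{4i+3}` form such a pair as well, and every block of indices `4i+1, …, 4i+4` carries the
coefficients `1, 2, 3` with multiplicities `2, 1, 1`. -/

open Finset

theorem card_filter_Ioc_mul_of_card_block {P : ℕ → Prop} [DecidablePred P] {q r : ℕ}
    (hblock : ∀ i, #{m ∈ Ioc (q * i) (q * i + q) | P m} = r) (t : ℕ) :
    #{m ∈ Ioc 0 (q * t) | P m} = r * t := by
  induction t with
  | zero => simp
  | succ t ih =>
    rw [mul_add_one, ← Ioc_union_Ioc_eq_Ioc (Nat.zero_le _) (Nat.le_add_right _ _), filter_union,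
      card_union_of_disjoint (disjoint_filter_filter (Ioc_disjoint_Ioc_of_le le_rfl)), ih,
      hblock, mul_add_one]

theorem tendsto_div_of_abs_sub_mul_le {u : ℕ → ℝ} {c C : ℝ} (h : ∀ N, |u N - c * N| ≤ C) :
    Tendsto (fun N : ℕ => u N / N) atTop (𝓝 c) := by
  rw [← tendsto_sub_nhds_zero_iff]
  refine squeeze_zero_norm' ?_ (tendsto_const_div_atTop_nhds_zero_nat C)
  filter_upwards [eventually_gt_atTop 0] with N hN
  have hN' : (0 : ℝ) < N := Nat.cast_pos.mpr hN
  rw [Real.norm_eq_abs, show u N / N - c = (u N - c * N) / N by field_simp, abs_div,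
    abs_of_pos hN']
  gcongr
  exact h N

theorem tendsto_card_filter_Icc_div_of_card_block {P : ℕ → Prop} [DecidablePred P] {q r : ℕ}
    (hq : 0 < q) (hblock : ∀ i, #{m ∈ Ioc (q * i) (q * i + q) | P m} = r) :
    Tendsto (fun N : ℕ => (#{m ∈ Icc 1 N | P m} : ℝ) / N) atTop (𝓝 (r / q)) := by
  refine tendsto_div_of_abs_sub_mul_le (C := r) fun N => ?_
  set t := N / q
  have hcount := card_filter_Ioc_mul_of_card_block hblock
  have hIcc : Icc 1 N = Ioc 0 N := Icc_add_one_left_eq_Ioc 0 N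
  have hqt : q * t ≤ N ∧ N < q * (t + 1) :=
    ⟨Nat.mul_div_le N q, by rw [mul_comm]; exact Nat.lt_mul_of_div_lt (Nat.lt_succ_self t) hq⟩
  have hlow : r * t ≤ #{m ∈ Icc 1 N | P m} := by
    rw [← hcount, hIcc]
    exact card_le_card (monotone_filter_left _ (Ioc_subset_Ioc_right hqt.1))
  have hup : #{m ∈ Icc 1 N | P m} ≤ r * (t + 1) := by
    rw [← hcount, hIcc]
    exact card_le_card (monotone_filter_left _ (Ioc_subset_Ioc_right hqt.2.le))
  have hqt' : (t : ℝ) ≤ N / q ∧ (N : ℝ) / q < t + 1 := by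
    have hq' : (0 : ℝ) < q := Nat.cast_pos.mpr hq
    rw [le_div_iff₀ hq', div_lt_iff₀ hq', mul_comm, mul_comm _ (q : ℝ)]
    exact_mod_cast hqt
  have hlow' : (r : ℝ) * t ≤ #{m ∈ Icc 1 N | P m} := by exact_mod_cast hlow
  have hup' : (#{m ∈ Icc 1 N | P m} : ℝ) ≤ r * (t + 1) := by exact_mod_cast hup
  have hr : (0 : ℝ) ≤ r := Nat.cast_nonneg r
  rw [abs_le, div_mul_eq_mul_div, mul_div_assoc]
  constructor <;> nlinarith [mul_le_mul_of_nonneg_left hqt'.1 hr,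
    mul_le_mul_of_nonneg_left hqt'.2.le hr]

theorem Nat.eq_and_eq_of_mul_pow_eq_mul_pow {b a a' j k : ℕ} (ha : 0 < a) (hab : a < b)
    (ha' : 0 < a') (hab' : a' < b) (h : a * b ^ j = a' * b ^ k) : a = a' ∧ j = k := by
  have hlog (c i : ℕ) (hc : 0 < c) (hcb : c < b) : Nat.log b (c * b ^ i) = i :=
    Nat.log_eq_of_pow_le_of_lt_pow (Nat.le_mul_of_pos_left _ hc)
      (by rw [pow_succ']; exact Nat.mul_lt_mul_of_pos_right hcb (pow_pos (hc.trans hcb) i))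
  have hjk : j = k := by rw [← hlog a j ha hab, h, hlog a' k ha' hab']
  subst hjk
  exact ⟨Nat.eq_of_mul_eq_mul_right (pow_pos (ha.trans hab) j) h, rfl⟩

theorem digits_two_sum_two_mul (j : ℕ) :
    (Nat.digits 2 (2 * j)).sum = (Nat.digits 2 j).sum := by
  rcases Nat.eq_zero_or_pos j with rfl | hj
  · simp
  · rw [← zero_add (2 * j), Nat.digits_add 2 one_lt_two 0 j two_pos (Or.inr hj.ne'),
      List.sum_cons, zero_add]

theorem digits_two_sum_two_mul_add_one (j : ℕ) :
    (Nat.digits 2 (2 * j + 1)).sum = (Nat.digits 2 j).sum + 1 := by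
  rw [add_comm, Nat.digits_add 2 one_lt_two 1 j one_lt_two (Or.inl one_ne_zero)]
  simp [add_comm]

theorem tm_eq_two_or_eq_three (n : ℕ) : tm n = 2 ∨ tm n = 3 := by
  unfold tm; split_ifs <;> simp

theorem tm_two_mul_add_one (j : ℕ) : tm (2 * j + 1) = tm (j + 1) := by
  simp only [tm, Nat.add_sub_cancel, digits_two_sum_two_mul]

theorem tm_two_mul_add_one_mul_tm_two_mul_add_two (j : ℕ) :
    tm (2 * j + 1) * tm (2 * j + 2) = 6 := by
  simp only [tm, Nat.add_sub_cancel, show 2 * j + 2 - 1 = 2 * j + 1 by omega,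
    digits_two_sum_two_mul, digits_two_sum_two_mul_add_one, Nat.even_add_one]
  split_ifs <;> simp_all

theorem tmProd_succ (n : ℕ) : tmProd (n + 1) = tmProd n * tm (n + 1) :=
  Finset.prod_Icc_succ_top (Nat.le_add_left 1 n) tm

theorem tmProd_two_mul (j : ℕ) : tmProd (2 * j) = 6 ^ j := by
  induction j with
  | zero => simp [tmProd]
  | succ j ih =>
    rw [show 2 * (j + 1) = 2 * j + 1 + 1 by ring, tmProd_succ, tmProd_succ, ih, mul_assoc,
      tm_two_mul_add_one_mul_tm_two_mul_add_two, pow_succ]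

def tmLead (m : ℕ) : ℕ := if Even m then 1 else tm m

theorem tmProd_eq_tmLead_mul_pow (m : ℕ) : tmProd m = tmLead m * 6 ^ (m / 2) := by
  rcases Nat.even_or_odd' m with ⟨j, rfl | rfl⟩
  · simp [tmLead, tmProd_two_mul]
  · rw [tmProd_succ, tmProd_two_mul, tmLead, if_neg (by simp [parity_simps]), mul_comm]
    congr 2
    omega

theorem tmLead_mem (m : ℕ) : tmLead m ∈ ({1, 2, 3} : Set ℕ) := by
  unfold tmLead
  split_ifs
  · simp
  · rcases tm_eq_two_or_eq_three m with h | h <;> simp [h]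

theorem exists_tmProd_eq_mul_pow_iff {a : ℕ} (ha : 0 < a) (ha6 : a < 6) (m : ℕ) :
    (∃ k, tmProd m = a * 6 ^ k) ↔ tmLead m = a := by
  obtain ⟨hpos, hlt⟩ : 0 < tmLead m ∧ tmLead m < 6 := by
    rcases tmLead_mem m with h | h | h <;> simp_all
  rw [tmProd_eq_tmLead_mul_pow]
  exact ⟨fun ⟨_, hk⟩ => (Nat.eq_and_eq_of_mul_pow_eq_mul_pow hpos hlt ha ha6 hk).1,
    fun h => ⟨m / 2, by rw [h]⟩⟩

theorem tm_four_mul_add_one_mul_tm_four_mul_add_three (i : ℕ) :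
    tm (4 * i + 1) * tm (4 * i + 3) = 6 := by
  rw [show 4 * i + 1 = 2 * (2 * i) + 1 by ring, show 4 * i + 3 = 2 * (2 * i + 1) + 1 by ring,
    tm_two_mul_add_one (2 * i), tm_two_mul_add_one (2 * i + 1)]
  exact tm_two_mul_add_one_mul_tm_two_mul_add_two i

theorem card_filter_tmLead_eq_block {a : ℕ} (ha : a ∈ ({1, 2, 3} : Set ℕ)) (i : ℕ) :
    #{m ∈ Ioc (4 * i) (4 * i + 4) | tmLead m = a} = if a = 1 then 2 else 1 := by
  have hIoc : Ioc (4 * i) (4 * i + 4) = {4 * i + 1, 4 * i + 2, 4 * i + 3, 4 * i + 4} := by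
    ext m; simp only [mem_Ioc, mem_insert, mem_singleton]; omega
  have hlead : tmLead (4 * i + 1) = tm (4 * i + 1) ∧ tmLead (4 * i + 2) = 1 ∧
      tmLead (4 * i + 3) = tm (4 * i + 3) ∧ tmLead (4 * i + 4) = 1 := by
    simp [tmLead, parity_simps]
  have hxy := tm_four_mul_add_one_mul_tm_four_mul_add_three i
  rw [hIoc, card_filter, sum_insert (by simp), sum_insert (by simp), sum_insert (by simp),
    sum_singleton, hlead.1, hlead.2.1, hlead.2.2.1, hlead.2.2.2]
  rcases tm_eq_two_or_eq_three (4 * i + 1) with hx | hx <;>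
    rcases tm_eq_two_or_eq_three (4 * i + 3) with hy | hy <;>
    rcases ha with rfl | rfl | rfl <;> simp_all

/-- Every Thue–Morse partial product has the form `a·6^k` with `a ∈ {1,2,3}`, and the set of
indices `m` for which `t*_m = a·6^k` for some `k` has density `1/2` for `a = 1` and `1/4`
for `a = 2, 3`. -/
theorem tmProd_form_and_density :
    (∀ n : ℕ, 1 ≤ n → ∃ a ∈ ({1, 2, 3} : Set ℕ), ∃ k : ℕ, tmProd n = a * 6 ^ k) ∧
    (∀ a ∈ ({1, 2, 3} : Set ℕ),
      Tendsto (fun N : ℕ =>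
          (Nat.card ↑{m : ℕ | m ∈ Set.Icc 1 N ∧ ∃ k : ℕ, tmProd m = a * 6 ^ k} : ℝ) / N)
        atTop (𝓝 (if a = 1 then 1 / 2 else 1 / 4))) := by
  refine ⟨fun n _ => ⟨tmLead n, tmLead_mem n, n / 2, tmProd_eq_tmLead_mul_pow n⟩, fun a ha => ?_⟩
  obtain ⟨ha0, ha6⟩ : 0 < a ∧ a < 6 := by rcases ha with rfl | rfl | rfl <;> simp
  have hset (N : ℕ) : {m : ℕ | m ∈ Set.Icc 1 N ∧ ∃ k : ℕ, tmProd m = a * 6 ^ k} =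
      ↑{m ∈ Icc 1 N | tmLead m = a} := by
    ext m
    simp [exists_tmProd_eq_mul_pow_iff ha0 ha6]
  simp only [hset, Nat.card_coe_set_eq, Set.ncard_coe_finset]
  convert tendsto_card_filter_Icc_div_of_card_block four_pos (card_filter_tmLead_eq_block ha)
    using 2
  split_ifs <;> norm_num
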